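/- Let G(t) = ∑_{n≥0} g_n t^n/[n]_q! and F(t) a formal power series with F(0)=0. Define the q-composition G[F]_q = ∑_{k≥0} g_k F^{[k]}/[k]_q!, where F^{[k]} is the Gessel q-power. Then D_q(G[F]_q) = (D_q G)[F]_q · D_q F. -/

import Mathlib

/-- The q-integer `[n]_q = 1 + q + ... + q^{n-1}`. -/
noncomputable def qInt {K : Type*} [CommRing K] (q : K) (n : ℕ) : K :=
  ∑ i ∈ Finset.range n, q ^ i

/-- The q-factorial `[n]_q!`. -/
noncomputable def qFact {K : Type*} [CommRing K] (q : K) (n : ℕ) : K :=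
  ∏ i ∈ Finset.range n, qInt q (i + 1)

/-- The q-derivative `D_q F(t) = (F(qt) - F(t))/((q-1)t)`. -/
noncomputable def qDeriv {K : Type*} [CommRing K] (q : K) (F : PowerSeries K) :
    PowerSeries K :=
  PowerSeries.mk fun n => qInt q (n + 1) * PowerSeries.coeff (n + 1) F

/-!
Gessel's q-powers satisfy `X ^ k ∣ F^{[k]}`, because the q-derivative lowers the order of a
series without constant term by exactly one. Hence the composition is a locally finite sum, and
on each finite partial sum the q-chain rule is just linearity of `D_q` together with
`D_q F^{[k+1]} = [k+1]_q F^{[k]} D_q F`, the factor `[k+1]_q` turning `1/[k+1]_q!` into `1/[k]_q!`.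
-/

section GesselComposition

open PowerSeries Finset

variable {K : Type*}

section CommRing

variable [CommRing K] (q : K)

@[simp]
theorem coeff_qDeriv (F : K⟦X⟧) (n : ℕ) :
    coeff n (qDeriv q F) = qInt q (n + 1) * coeff (n + 1) F :=
  coeff_mk _ _

@[simp]
theorem qDeriv_C (c : K) : qDeriv q (C c) = 0 := by
  ext n
  simp

theorem qDeriv_C_mul (c : K) (F : K⟦X⟧) : qDeriv q (C c * F) = C c * qDeriv q F := by
  ext n
  simp only [coeff_qDeriv, coeff_C_mul]
  ring

theorem qDeriv_add (F G : K⟦X⟧) : qDeriv q (F + G) = qDeriv q F + qDeriv q G := by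
  ext n
  simp [mul_add]

theorem qDeriv_sum {ι : Type*} (s : Finset ι) (F : ι → K⟦X⟧) :
    qDeriv q (∑ i ∈ s, F i) = ∑ i ∈ s, qDeriv q (F i) := by
  ext n
  simp [map_sum, mul_sum]

theorem qFact_succ (k : ℕ) : qFact q (k + 1) = qFact q k * qInt q (k + 1) :=
  prod_range_succ _ _

theorem coeff_mul_eq_of_coeff_eq {A A' : K⟦X⟧} (B : K⟦X⟧) {n : ℕ}
    (h : ∀ m ≤ n, coeff m A = coeff m A') : coeff n (A * B) = coeff n (A' * B) := by
  simp only [coeff_mul]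
  exact sum_congr rfl fun p hp => by rw [h p.1 (Finset.HasAntidiagonal.antidiagonal.fst_le hp)]

end CommRing

section Domain

variable [CommRing K] [NoZeroDivisors K] {q : K}

theorem X_pow_succ_dvd_of_qDeriv (hq : ∀ m : ℕ, 1 ≤ m → qInt q m ≠ 0) {G : K⟦X⟧}
    (hG : constantCoeff G = 0) {m : ℕ} (hD : X ^ m ∣ qDeriv q G) : X ^ (m + 1) ∣ G := by
  refine X_pow_dvd_iff.mpr fun n hn => ?_
  cases n with
  | zero => simpa using hG
  | succ j =>
    have hj := X_pow_dvd_iff.mp hD j (by omega)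
    rw [coeff_qDeriv] at hj
    exact (mul_eq_zero.mp hj).resolve_left (hq (j + 1) (by omega))

theorem X_pow_dvd_gesselPower (hq : ∀ m : ℕ, 1 ≤ m → qInt q m ≠ 0) {F : K⟦X⟧}
    {Fk : ℕ → K⟦X⟧} (hFkc : ∀ k, 0 < k → constantCoeff (Fk k) = 0)
    (hFkrec : ∀ k, 0 < k → qDeriv q (Fk k) = C (qInt q k) * Fk (k - 1) * qDeriv q F) (k : ℕ) :
    X ^ k ∣ Fk k := by
  induction k with
  | zero => simp
  | succ k ih =>
    refine X_pow_succ_dvd_of_qDeriv hq (hFkc _ k.succ_pos) ?_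
    rw [hFkrec _ k.succ_pos, Nat.succ_sub_one, mul_comm (C _)]
    exact (ih.mul_right _).mul_right _

end Domain

section Field

variable [Field K] (q : K)

/-- Partial sums of the q-composition `G[F]_q`. -/
noncomputable def qCompPartialSum (g : ℕ → K) (Fk : ℕ → K⟦X⟧) (N : ℕ) : K⟦X⟧ :=
  ∑ k ∈ range N, C (g k / qFact q k) * Fk k

theorem coeff_qCompPartialSum_of_lt {Fk : ℕ → K⟦X⟧} (hFk : ∀ k, X ^ k ∣ Fk k) (g : ℕ → K)
    {n N : ℕ} (hN : n < N) :
    coeff n (qCompPartialSum q g Fk N) =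
      ∑ k ∈ range (n + 1), g k / qFact q k * coeff n (Fk k) := by
  simp only [qCompPartialSum, map_sum, coeff_C_mul]
  refine (sum_subset (range_subset_range.mpr hN) fun k _ hk => ?_).symm
  rw [X_pow_dvd_iff.mp (hFk k) n (by simpa using hk), mul_zero]

variable {q}

theorem qDeriv_qCompPartialSum_succ (hq : ∀ m : ℕ, 1 ≤ m → qInt q m ≠ 0) {F : K⟦X⟧}
    {Fk : ℕ → K⟦X⟧} (hFk0 : Fk 0 = 1)
    (hFkrec : ∀ k, 0 < k → qDeriv q (Fk k) = C (qInt q k) * Fk (k - 1) * qDeriv q F)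
    (g : ℕ → K) (N : ℕ) :
    qDeriv q (qCompPartialSum q g Fk (N + 1)) =
      qCompPartialSum q (fun k => g (k + 1)) Fk N * qDeriv q F := by
  rw [qCompPartialSum, sum_range_succ', qDeriv_add, qDeriv_sum, hFk0, mul_one, qDeriv_C,
    add_zero, qCompPartialSum, sum_mul]
  refine sum_congr rfl fun k _ => ?_
  rw [qDeriv_C_mul, hFkrec (k + 1) k.succ_pos, Nat.add_sub_cancel, ← mul_assoc, ← mul_assoc,
    ← map_mul, qFact_succ, div_mul_eq_mul_div, mul_div_mul_right _ _ (hq (k + 1) k.succ_pos)]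

end Field

end GesselComposition

open PowerSeries Finset in
/-- Here `Cs = G[F]_q` and `Ds = (D_q G)[F]_q` are given by their coefficients. -/
theorem stmt10_general {K : Type*} [Field K] (q : K)
    (hq : ∀ m : ℕ, 1 ≤ m → qInt q m ≠ 0)
    (F : PowerSeries K)
    (Fk : ℕ → PowerSeries K) (hFk0 : Fk 0 = 1)
    (hFkc : ∀ k, 0 < k → PowerSeries.constantCoeff (Fk k) = 0)
    (hFkrec : ∀ k, 0 < k → qDeriv q (Fk k) =
      PowerSeries.C (qInt q k) * Fk (k - 1) * qDeriv q F)
    (g : ℕ → K) (Cs Ds : PowerSeries K)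
    (hC : ∀ n, PowerSeries.coeff n Cs =
      ∑ k ∈ Finset.range (n + 1), g k / qFact q k * PowerSeries.coeff n (Fk k))
    (hD : ∀ n, PowerSeries.coeff n Ds =
      ∑ k ∈ Finset.range (n + 1), g (k + 1) / qFact q k * PowerSeries.coeff n (Fk k)) :
    qDeriv q Cs = Ds * qDeriv q F := by
  have hFk := X_pow_dvd_gesselPower hq hFkc hFkrec
  ext n
  calc coeff n (qDeriv q Cs)
      = coeff n (qDeriv q (qCompPartialSum q g Fk (n + 2))) := by
        rw [coeff_qDeriv, coeff_qDeriv, hC, coeff_qCompPartialSum_of_lt q hFk _ (by omega)]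
    _ = coeff n (qCompPartialSum q (fun k => g (k + 1)) Fk (n + 1) * qDeriv q F) := by
        rw [qDeriv_qCompPartialSum_succ hq hFk0 hFkrec]
    _ = coeff n (Ds * qDeriv q F) := coeff_mul_eq_of_coeff_eq _ fun m hm => by
        rw [hD, coeff_qCompPartialSum_of_lt q hFk _ (by omega)]

/-- Proposition 5.3: for the Gessel q-composition `G[F]_q = ∑_k g_k F^{[k]}/[k]!`
(here `Cs = G[F]_q` and `Ds = (D_q G)[F]_q`, described coefficientwise, with
`G = ∑ₙ gₙ tⁿ/[n]!` and `F^{[k]}` the Gessel q-powers of `F`),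
one has `D_q (G[F]_q) = (D_q G)[F]_q ⬝ D_q F`. -/
theorem stmt10 {K : Type*} [Field K] (q : K)
    (hq : ∀ m : ℕ, 1 ≤ m → qInt q m ≠ 0)
    (F : PowerSeries K) (hF0 : PowerSeries.constantCoeff F = 0)
    (Fk : ℕ → PowerSeries K) (hFk0 : Fk 0 = 1)
    (hFkc : ∀ k, 0 < k → PowerSeries.constantCoeff (Fk k) = 0)
    (hFkrec : ∀ k, 0 < k → qDeriv q (Fk k) =
      PowerSeries.C (qInt q k) * Fk (k - 1) * qDeriv q F)
    (g : ℕ → K) (Cs Ds : PowerSeries K)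
    (hC : ∀ n, PowerSeries.coeff n Cs =
      ∑ k ∈ Finset.range (n + 1), g k / qFact q k * PowerSeries.coeff n (Fk k))
    (hD : ∀ n, PowerSeries.coeff n Ds =
      ∑ k ∈ Finset.range (n + 1), g (k + 1) / qFact q k * PowerSeries.coeff n (Fk k)) :
    qDeriv q Cs = Ds * qDeriv q F :=
  stmt10_general q hq F Fk hFk0 hFkc hFkrec g Cs Ds hC hD
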